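/- Let $N \ge 1$ and let $a_1, \dots, a_N$ be integers with $a_j \ge 2$ for all $j$. Let $P(x_1,\dots,x_N) = x_1^{a_1}x_2 + \cdots + x_{N-1}^{a_{N-1}}x_N + x_N^{a_N}$ be the chain polynomial over $\mathbb{C}$. If $x \in \mathbb{C}^N$ is a point at which all partial derivatives $\partial P/\partial x_1, \dots, \partial P/\partial x_N$ vanish, then $x = 0$. In other words, the chain polynomial has an isolated singularity at the origin. -/

import Mathlib

/-!
Setting `x_N := 1` turns the chain polynomial into `∑_{j<N} x_j^{a_j} x_{j+1}`, whose critical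
equations read `a_i x_i^{a_i-1} x_{i+1} + x_{i-1}^{a_{i-1}} = 0`, the second term being absent
for `i = 0`. Since `a_i ≥ 2`, the equation at `i` shows that `x_i = 0` forces `x_{i-1} = 0`,
and that `x_i, x_{i+1} ≠ 0` forces `x_{i-1} ≠ 0`. If `x_{N-1} ≠ 0`, the second rule propagates
from the pair `x_{N-1}, x_N = 1` down to `x_0, x_1 ≠ 0`, contradicting the equation at `0`.
Hence `x_{N-1} = 0`, and the first rule propagates this down to `x_0`.
-/

open Finset Function

/-- With `y N = 1` this is the chain polynomial in `y 0, …, y (N - 1)`. -/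
def chainSum {R : Type*} [CommSemiring R] (a : ℕ → ℕ) (N : ℕ) (y : ℕ → R) : R :=
  ∑ j ∈ range N, y j ^ a j * y (j + 1)

def IsChainCritical {R : Type*} [CommSemiring R] (a : ℕ → ℕ) (N : ℕ) (y : ℕ → R) : Prop :=
  ∀ i < N, a i * y i ^ (a i - 1) * y (i + 1) + (if 0 < i then y (i - 1) ^ a (i - 1) else 0) = 0

theorem chainSum_update_update_one {R : Type*} [CommSemiring R] (a : ℕ → ℕ) (u : ℕ → R)
    (M : ℕ) {i : ℕ} (hi : i ≠ M + 1) :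
    (fun t => (∑ j ∈ range M, update u i t j ^ a j * update u i t (j + 1))
        + update u i t M ^ a M) =
      fun t => chainSum a (M + 1) (update (update u (M + 1) 1) i t) := by
  funext t
  rw [chainSum, ← update_comm hi, sum_range_succ, update_self, mul_one,
    update_of_ne (Nat.succ_ne_self M).symm]
  congr 1
  refine sum_congr rfl fun j hj => ?_
  have hj : j + 1 < M + 1 := by simpa using hj
  rw [update_of_ne (a' := M + 1) (by omega), update_of_ne (a' := M + 1) (by omega)]

section Derivative

variable {𝕜 : Type*} [NontriviallyNormedField 𝕜]

theorem hasDerivAt_update_pow_mul_update (y : ℕ → 𝕜) (n i j : ℕ) :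
    HasDerivAt (fun t => update y i t j ^ n * update y i t (j + 1))
      ((if j = i then n * y i ^ (n - 1) * y (i + 1) else 0) +
        if j + 1 = i then y j ^ n else 0) (y i) := by
  rcases eq_or_ne j i with rfl | hji
  · have hj : j + 1 ≠ j := Nat.succ_ne_self j
    simp only [update_self, update_of_ne hj, if_pos, if_neg hj, add_zero]
    exact (hasDerivAt_pow n (y j)).mul_const (y (j + 1))
  rcases eq_or_ne (j + 1) i with rfl | hji'
  · simp only [update_of_ne hji, update_self, if_neg hji, if_pos, zero_add]
    simpa using (hasDerivAt_id (y (j + 1))).const_mul (y j ^ n)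
  · simp only [update_of_ne hji, update_of_ne hji', if_neg hji, if_neg hji', add_zero]
    exact hasDerivAt_const _ _

theorem sum_range_ite_succ_eq {M : Type*} [AddCommMonoid M] (f : ℕ → M) {N i : ℕ}
    (hi : i < N) :
    ∑ j ∈ range N, (if j + 1 = i then f j else 0) = if 0 < i then f (i - 1) else 0 := by
  rcases Nat.eq_zero_or_pos i with rfl | hi0
  · simp
  · obtain ⟨k, rfl⟩ : ∃ k, i = k + 1 := ⟨i - 1, by omega⟩
    simp only [add_left_inj, sum_ite_eq', mem_range, if_pos hi0, add_tsub_cancel_right]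
    exact if_pos (by omega)

theorem hasDerivAt_chainSum_update (a : ℕ → ℕ) (y : ℕ → 𝕜) {N i : ℕ} (hi : i < N) :
    HasDerivAt (fun t => chainSum a N (update y i t))
      (a i * y i ^ (a i - 1) * y (i + 1) + if 0 < i then y (i - 1) ^ a (i - 1) else 0)
      (y i) := by
  have h := HasDerivAt.fun_sum (u := range N)
    (fun j _ => hasDerivAt_update_pow_mul_update y (a j) i j)
  rwa [sum_add_distrib, sum_ite_eq', if_pos (mem_range.mpr hi),
    sum_range_ite_succ_eq _ hi] at h

end Derivative

section Descent

variable {R : Type*} [CommRing R] {a : ℕ → ℕ} {N : ℕ} {y : ℕ → R}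

theorem IsChainCritical.eq_zero_of_succ_eq_zero [NoZeroDivisors R] (h : IsChainCritical a N y)
    (ha : ∀ j < N, 2 ≤ a j) {i : ℕ} (hi : i + 1 < N) (hy : y (i + 1) = 0) : y i = 0 := by
  have hcrit := h (i + 1) hi
  rw [hy, zero_pow (by have := ha (i + 1) hi; omega), if_pos i.succ_pos,
    add_tsub_cancel_right] at hcrit
  simp only [mul_zero, zero_mul, zero_add] at hcrit
  exact pow_eq_zero_iff (by have := ha i (by omega); omega) |>.mp hcrit

theorem IsChainCritical.ne_zero_of_succ_ne_zero [NoZeroDivisors R] [CharZero R]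
    (h : IsChainCritical a N y) (ha : ∀ j < N, 2 ≤ a j) {i : ℕ} (hi : i + 1 < N)
    (hy₁ : y (i + 1) ≠ 0) (hy₂ : y (i + 2) ≠ 0) : y i ≠ 0 := by
  have hcrit := h (i + 1) hi
  rw [if_pos i.succ_pos, add_tsub_cancel_right, ← eq_neg_iff_add_eq_zero] at hcrit
  have hpow : a (i + 1) * y (i + 1) ^ (a (i + 1) - 1) * y (i + 2) ≠ 0 :=
    mul_ne_zero (mul_ne_zero (by have := ha (i + 1) hi; norm_cast; omega)
      (pow_ne_zero _ hy₁)) hy₂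
  intro hy
  rw [hy, zero_pow (by have := ha i (by omega); omega), neg_zero] at hcrit
  exact hpow hcrit

theorem IsChainCritical.eq_zero [NoZeroDivisors R] [CharZero R] (h : IsChainCritical a N y)
    (ha : ∀ j < N, 2 ≤ a j) (hN : y N ≠ 0) : ∀ j < N, y j = 0 := by
  intro j hj
  obtain ⟨M, rfl⟩ : ∃ M, N = M + 1 := ⟨N - 1, by omega⟩
  have hlast : y M = 0 := by
    by_contra hM
    have hpair : y 0 ≠ 0 ∧ y 1 ≠ 0 :=
      Nat.decreasingInduction (motive := fun k _ => y k ≠ 0 ∧ y (k + 1) ≠ 0)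
        (fun k _ ih => ⟨h.ne_zero_of_succ_ne_zero ha (by omega) ih.1 ih.2, ih.1⟩)
        ⟨hM, hN⟩ (Nat.zero_le M)
    have hcrit := h 0 M.succ_pos
    rw [if_neg (lt_irrefl 0), add_zero] at hcrit
    exact mul_ne_zero (mul_ne_zero (by have := ha 0 M.succ_pos; norm_cast; omega)
      (pow_ne_zero _ hpair.1)) hpair.2 hcrit
  exact Nat.decreasingInduction (motive := fun k _ => y k = 0)
    (fun k _ ih => h.eq_zero_of_succ_eq_zero ha (by omega) ih) hlast (by omega : j ≤ M)

end Descent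

theorem chain_isolated_singularity_general (N : ℕ) (a : ℕ → ℕ)
    (ha : ∀ j < N, 2 ≤ a j) (x : ℕ → ℂ)
    (hcrit : ∀ i < N,
      deriv (fun t : ℂ =>
        (∑ j ∈ Finset.range (N - 1),
            (Function.update x i t) j ^ a j * (Function.update x i t) (j + 1))
          + (Function.update x i t) (N - 1) ^ a (N - 1)) (x i) = 0) :
    ∀ j < N, x j = 0 := by
  intro j hj
  obtain ⟨M, rfl⟩ : ∃ M, N = M + 1 := ⟨N - 1, by omega⟩
  set y := update x (M + 1) 1
  have hy : ∀ i < M + 1, y i = x i := fun i hi => update_of_ne (by omega) _ _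
  have hcrit_y : IsChainCritical a (M + 1) y := fun i hi => by
    have h := hcrit i hi
    rwa [Nat.add_sub_cancel, chainSum_update_update_one a x M (by omega), ← hy i hi,
      (hasDerivAt_chainSum_update a y hi).deriv] at h
  rw [← hy j hj]
  exact hcrit_y.eq_zero ha (by simp [y]) j hj

/-- The chain polynomial `P = ∑_{j<N-1} x_j^{a_j} x_{j+1} + x_{N-1}^{a_{N-1}}`
(with all `a_j ≥ 2`) has an isolated singularity at the origin: if all partial
derivatives of `P` vanish at `x`, then `x = 0`. (Indices are 0-based.) -/
theorem chain_isolated_singularity (N : ℕ) (hN : 1 ≤ N) (a : ℕ → ℕ)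
    (ha : ∀ j < N, 2 ≤ a j) (x : ℕ → ℂ)
    (hcrit : ∀ i < N,
      deriv (fun t : ℂ =>
        (∑ j ∈ Finset.range (N - 1),
            (Function.update x i t) j ^ a j * (Function.update x i t) (j + 1))
          + (Function.update x i t) (N - 1) ^ a (N - 1)) (x i) = 0) :
    ∀ j < N, x j = 0 :=
  chain_isolated_singularity_general N a ha x hcrit
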